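/- arXiv:1605.00047 — 6 statements merged into one kernel-verified Lean document; each statement's English description precedes it below -/
import Mathlib

section
/- Let a, a1, c, n be positive integers with (4a+3)/7 + (4a1+3)/7 + c − 1 ≥ (4n−1)/7, and suppose that (4a+3, 4a1+3) is not congruent to (0,4) or (4,0) modulo 7. Then max over A ∈ {0,1} of [ ⌈(4(a−A)+3)/7⌉ + ⌈(4(a1−A)+3)/7⌉ + c − (1−A) ] ≥ ⌈(4n+3)/7⌉. -/
/-!
Write `x = 7p - r`, `y = 7q - s` with `0 ≤ r, s < 7`, so that `⌈x/7⌉ = p` and `⌈y/7⌉ = q`.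
If `r + s ≥ 4` then `⌈(x + y + 4)/7⌉ ≤ p + q` and the shift `A = 0` suffices. Otherwise
`r + s ≤ 3`, and subtracting `4` from both `x` and `y` leaves their ceilings over `7` unchanged
unless `r = 3` or `s = 3`; for `r + s ≤ 3` that happens only for `(r, s) = (3, 0)` or `(0, 3)`,
i.e. for the excluded residues `(x, y) ≡ (4, 0)` or `(0, 4)`.
-/

lemma ceil_div_seven_le_max_of_le {x y m k : ℤ} (hm : m ≤ x + y + 7 * k + 4)
    (hxy : ¬ (x % 7 = 0 ∧ y % 7 = 4)) (hyx : ¬ (x % 7 = 4 ∧ y % 7 = 0)) :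
    ⌈(m : ℚ) / 7⌉ ≤
      max (⌈(x : ℚ) / 7⌉ + ⌈(y : ℚ) / 7⌉ + k)
        (⌈((x - 4 : ℤ) : ℚ) / 7⌉ + ⌈((y - 4 : ℤ) : ℚ) / 7⌉ + k + 1) := by
  have hceil (z : ℤ) : ⌈(z : ℚ) / 7⌉ = -((-z) / 7) := mod_cast Rat.ceil_intCast_div_natCast z 7
  simp only [hceil, le_max_iff]
  omega

theorem ineq_lemma_two_part2_general (a a1 c n : ℕ)
    (hineq : (4 * (a : ℚ) + 3) / 7 + (4 * (a1 : ℚ) + 3) / 7 + (c : ℚ) - 1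
      ≥ (4 * (n : ℚ) - 1) / 7)
    (hmod1 : ¬ ((4 * a + 3) % 7 = 0 ∧ (4 * a1 + 3) % 7 = 4))
    (hmod2 : ¬ ((4 * a + 3) % 7 = 4 ∧ (4 * a1 + 3) % 7 = 0)) :
    ⌈(4 * (n : ℚ) + 3) / 7⌉ ≤
      max (⌈(4 * (a : ℚ) + 3) / 7⌉ + ⌈(4 * (a1 : ℚ) + 3) / 7⌉ + (c : ℤ) - 1)
        (⌈(4 * ((a : ℚ) - 1) + 3) / 7⌉ + ⌈(4 * ((a1 : ℚ) - 1) + 3) / 7⌉ + (c : ℤ)) := by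
  have hle : 4 * (n : ℤ) + 3 ≤ (4 * a + 3) + (4 * a1 + 3) + 7 * ((c : ℤ) - 1) + 4 := by
    qify
    linarith
  have key := ceil_div_seven_le_max_of_le hle (by omega) (by omega)
  push_cast at key
  refine key.trans (le_of_eq ?_)
  congr 1 <;> ring_nf

/-- Lemma 2.2(2): for positive integers `a, a1, c, n` with
`(4a+3)/7 + (4a1+3)/7 + c - 1 ≥ (4n-1)/7` and
`(4a+3, 4a1+3) ≢ (0,4), (4,0) (mod 7)`, the maximum over `A ∈ {0,1}` of
`⌈(4(a-A)+3)/7⌉ + ⌈(4(a1-A)+3)/7⌉ + c - (1-A)` is at least `⌈(4n+3)/7⌉`. -/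
theorem ineq_lemma_two_part2 (a a1 c n : ℕ)
    (ha : 0 < a) (ha1 : 0 < a1) (hc : 0 < c) (hn : 0 < n)
    (hineq : (4 * (a : ℚ) + 3) / 7 + (4 * (a1 : ℚ) + 3) / 7 + (c : ℚ) - 1
      ≥ (4 * (n : ℚ) - 1) / 7)
    (hmod1 : ¬ ((4 * a + 3) % 7 = 0 ∧ (4 * a1 + 3) % 7 = 4))
    (hmod2 : ¬ ((4 * a + 3) % 7 = 4 ∧ (4 * a1 + 3) % 7 = 0)) :
    ⌈(4 * (n : ℚ) + 3) / 7⌉ ≤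
      max (⌈(4 * (a : ℚ) + 3) / 7⌉ + ⌈(4 * (a1 : ℚ) + 3) / 7⌉ + (c : ℤ) - 1)
        (⌈(4 * ((a : ℚ) - 1) + 3) / 7⌉ + ⌈(4 * ((a1 : ℚ) - 1) + 3) / 7⌉ + (c : ℤ)) :=
  ineq_lemma_two_part2_general a a1 c n hineq hmod1 hmod2
end

section
/- Let a, a1, a2, c, n be positive integers with (4a+3)/7 + (4a1+3)/7 + (4a2+3)/7 + c − 2 ≥ (4n−4)/7. If the residue triple (4a+3, 4a1+3, 4a2+3) modulo 7 is not one of (1,0,0), (4,0,4), (4,4,0), (0,4,4), then max over A1, A2 ∈ {0,1} of [ ⌈(4(a−A1−A2)+3)/7⌉ + ⌈(4(a1−A1)+3)/7⌉ + ⌈(4(a2−A2)+3)/7⌉ + c − (1−A1) − (1−A2) ] ≥ ⌈(4n+3)/7⌉. -/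
/-!
With `x = 4a+3`, `y = 4a1+3`, `z = 4a2+3`, the hypothesis gives
`⌈(4n+3)/7⌉ ≤ ⌈(x+y+z)/7⌉ + c - 1`, so it suffices that `⌈(x+y+z)/7⌉` exceeds the maximum over
the four shifts by at most one. Adding `7` to any of `x, y, z` raises both sides by one, so this
depends only on the residues of `x, y, z` mod `7` and is a finite check.
-/

/-- `⌈m / 7⌉` in a form that `decide` can evaluate. -/
def ceilDivSeven (m : ℤ) : ℤ := -(-m / 7)

theorem Int.ceil_intCast_div_seven (m : ℤ) : ⌈(m : ℚ) / 7⌉ = ceilDivSeven m := by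
  exact_mod_cast Rat.ceil_intCast_div_natCast m 7

theorem ceilDivSeven_add_seven_mul (m k : ℤ) : ceilDivSeven (m + 7 * k) = ceilDivSeven m + k := by
  unfold ceilDivSeven
  omega

def shiftMax (x y z : ℤ) : ℤ :=
  max
    (max (ceilDivSeven x + ceilDivSeven y + ceilDivSeven z - 2)
      (ceilDivSeven (x - 4) + ceilDivSeven y + ceilDivSeven (z - 4) - 1))
    (max (ceilDivSeven (x - 4) + ceilDivSeven (y - 4) + ceilDivSeven z - 1)
      (ceilDivSeven (x - 8) + ceilDivSeven (y - 4) + ceilDivSeven (z - 4)))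

theorem shiftMax_add_seven_mul (x y z p q r : ℤ) :
    shiftMax (x + 7 * p) (y + 7 * q) (z + 7 * r) = shiftMax x y z + (p + q + r) := by
  have shift (m k p : ℤ) : ceilDivSeven (m + 7 * p - k) = ceilDivSeven (m - k) + p := by
    rw [show m + 7 * p - k = m - k + 7 * p by ring, ceilDivSeven_add_seven_mul]
  simp only [shiftMax, shift, ceilDivSeven_add_seven_mul, ← max_add_add_right]
  congr 2 <;> ring

/-- The residue triples mod `7` at which `ceilDivSeven_add_add_le_shiftMax_add_one` fails. -/
def exceptionalResidues : List (ℕ × ℕ × ℕ) := [(1,0,0),(4,0,4),(4,4,0),(0,4,4)]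

theorem ceilDivSeven_add_add_le_shiftMax_add_one_of_fin : ∀ r s t : Fin 7,
    ((r : ℕ), (s : ℕ), (t : ℕ)) ∉ exceptionalResidues →
      ceilDivSeven (r + s + t) ≤ shiftMax r s t + 1 := by
  unfold ceilDivSeven shiftMax exceptionalResidues
  decide

theorem ceilDivSeven_add_add_le_shiftMax_add_one (x y z : ℕ)
    (h : (x % 7, y % 7, z % 7) ∉ exceptionalResidues) :
    ceilDivSeven (x + y + z) ≤ shiftMax x y z + 1 := by
  have hres := ceilDivSeven_add_add_le_shiftMax_add_one_of_fin
    ⟨x % 7, Nat.mod_lt _ (by norm_num)⟩ ⟨y % 7, Nat.mod_lt _ (by norm_num)⟩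
    ⟨z % 7, Nat.mod_lt _ (by norm_num)⟩ h
  have hsum : ceilDivSeven (x + y + z) =
      ceilDivSeven (↑(x % 7) + ↑(y % 7) + ↑(z % 7)) + (↑(x / 7) + ↑(y / 7) + ↑(z / 7)) := by
    rw [← ceilDivSeven_add_seven_mul]
    congr 1
    omega
  have hshift : shiftMax x y z =
      shiftMax ↑(x % 7) ↑(y % 7) ↑(z % 7) + (↑(x / 7) + ↑(y / 7) + ↑(z / 7)) := by
    rw [← shiftMax_add_seven_mul]
    congr 1 <;> omega
  rw [hsum, hshift]
  linarith

theorem ineq_lemma_two_part4_general (a a1 a2 c n : ℕ)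
    (hineq : (4 * (a : ℚ) + 3) / 7 + (4 * (a1 : ℚ) + 3) / 7 + (4 * (a2 : ℚ) + 3) / 7
      + (c : ℚ) - 2 ≥ (4 * (n : ℚ) - 4) / 7)
    (hmod : ((4 * a + 3) % 7, (4 * a1 + 3) % 7, (4 * a2 + 3) % 7) ∉
      ([(1,0,0),(4,0,4),(4,4,0),(0,4,4)] : List (ℕ × ℕ × ℕ))) :
    ⌈(4 * (n : ℚ) + 3) / 7⌉ ≤
      max
        (max
          (⌈(4 * (a : ℚ) + 3) / 7⌉ + ⌈(4 * (a1 : ℚ) + 3) / 7⌉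
            + ⌈(4 * (a2 : ℚ) + 3) / 7⌉ + (c : ℤ) - 2)
          (⌈(4 * ((a : ℚ) - 1) + 3) / 7⌉ + ⌈(4 * (a1 : ℚ) + 3) / 7⌉
            + ⌈(4 * ((a2 : ℚ) - 1) + 3) / 7⌉ + (c : ℤ) - 1))
        (max
          (⌈(4 * ((a : ℚ) - 1) + 3) / 7⌉ + ⌈(4 * ((a1 : ℚ) - 1) + 3) / 7⌉
            + ⌈(4 * (a2 : ℚ) + 3) / 7⌉ + (c : ℤ) - 1)
          (⌈(4 * ((a : ℚ) - 1 - 1) + 3) / 7⌉ + ⌈(4 * ((a1 : ℚ) - 1) + 3) / 7⌉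
            + ⌈(4 * ((a2 : ℚ) - 1) + 3) / 7⌉ + (c : ℤ))) := by
  set S : ℤ := ↑(4 * a + 3) + ↑(4 * a1 + 3) + ↑(4 * a2 + 3)
  have hn_le : ⌈(4 * (n : ℚ) + 3) / 7⌉ ≤ ceilDivSeven S + c - 1 := by
    have hS := Int.le_ceil ((S : ℚ) / 7)
    rw [Int.ceil_intCast_div_seven] at hS
    rw [Int.ceil_le]
    push_cast [S] at hS ⊢
    linarith
  calc ⌈(4 * (n : ℚ) + 3) / 7⌉ ≤ ceilDivSeven S + c - 1 := hn_le
    _ ≤ shiftMax ↑(4 * a + 3) ↑(4 * a1 + 3) ↑(4 * a2 + 3) + c := by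
      linarith [ceilDivSeven_add_add_le_shiftMax_add_one _ _ _ hmod]
    _ = _ := by
      simp only [shiftMax, ← max_add_add_right, ← Int.ceil_intCast_div_seven]
      push_cast
      ring_nf

/-- Lemma 2.2(4): for positive integers `a, a1, a2, c, n` with
`(4a+3)/7 + (4a1+3)/7 + (4a2+3)/7 + c - 2 ≥ (4n-4)/7`, if the residue triple
`(4a+3, 4a1+3, 4a2+3) mod 7` is not one of `(1,0,0), (4,0,4), (4,4,0), (0,4,4)`,
then the maximum over `A1, A2 ∈ {0,1}` of
`⌈(4(a-A1-A2)+3)/7⌉ + ⌈(4(a1-A1)+3)/7⌉ + ⌈(4(a2-A2)+3)/7⌉ + c - (1-A1) - (1-A2)`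
is at least `⌈(4n+3)/7⌉`. -/
theorem ineq_lemma_two_part4 (a a1 a2 c n : ℕ)
    (ha : 0 < a) (ha1 : 0 < a1) (ha2 : 0 < a2) (hc : 0 < c) (hn : 0 < n)
    (hineq : (4 * (a : ℚ) + 3) / 7 + (4 * (a1 : ℚ) + 3) / 7 + (4 * (a2 : ℚ) + 3) / 7
      + (c : ℚ) - 2 ≥ (4 * (n : ℚ) - 4) / 7)
    (hmod : ((4 * a + 3) % 7, (4 * a1 + 3) % 7, (4 * a2 + 3) % 7) ∉
      ([(1,0,0),(4,0,4),(4,4,0),(0,4,4)] : List (ℕ × ℕ × ℕ))) :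
    ⌈(4 * (n : ℚ) + 3) / 7⌉ ≤
      max
        (max
          (⌈(4 * (a : ℚ) + 3) / 7⌉ + ⌈(4 * (a1 : ℚ) + 3) / 7⌉
            + ⌈(4 * (a2 : ℚ) + 3) / 7⌉ + (c : ℤ) - 2)
          (⌈(4 * ((a : ℚ) - 1) + 3) / 7⌉ + ⌈(4 * (a1 : ℚ) + 3) / 7⌉
            + ⌈(4 * ((a2 : ℚ) - 1) + 3) / 7⌉ + (c : ℤ) - 1))
        (max
          (⌈(4 * ((a : ℚ) - 1) + 3) / 7⌉ + ⌈(4 * ((a1 : ℚ) - 1) + 3) / 7⌉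
            + ⌈(4 * (a2 : ℚ) + 3) / 7⌉ + (c : ℤ) - 1)
          (⌈(4 * ((a : ℚ) - 1 - 1) + 3) / 7⌉ + ⌈(4 * ((a1 : ℚ) - 1) + 3) / 7⌉
            + ⌈(4 * ((a2 : ℚ) - 1) + 3) / 7⌉ + (c : ℤ))) :=
  ineq_lemma_two_part4_general a a1 a2 c n hineq hmod
end

section
/- Let k ≥ 1, let a1, ..., ak, c, n be positive integers with (Σ_{i=1}^k (4ai+3)/7) + c ≥ (4n+2)/7. Then either Σ_{i=1}^k ⌈(4ai+3)/7⌉ + c ≥ ⌈(4n+3)/7⌉, or 4ai+3 ≡ 0 (mod 7) for every i ∈ {1,...,k}. -/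
theorem Int.add_one_div_le_ceil_div_of_not_dvd {m : ℤ} {d : ℕ} (hd : 0 < d) (h : ¬ (d : ℤ) ∣ m) :
    ((m : ℚ) + 1) / d ≤ ⌈(m : ℚ) / d⌉ := by
  have hd' : (0 : ℚ) < d := by exact_mod_cast hd
  have hle : m ≤ d * ⌈(m : ℚ) / d⌉ := by
    have : (m : ℚ) ≤ d * ⌈(m : ℚ) / d⌉ := by
      rw [← div_le_iff₀' hd']
      exact Int.le_ceil _
    exact_mod_cast this
  have hne : m ≠ d * ⌈(m : ℚ) / d⌉ := fun he => h ⟨_, he⟩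
  have hlt : (m : ℚ) + 1 ≤ d * ⌈(m : ℚ) / d⌉ := by exact_mod_cast lt_of_le_of_ne hle hne
  rwa [div_le_iff₀' hd']

theorem Finset.sum_add_le_sum_of_le_of_mem {ι α : Type*} [AddCommMonoid α] [PartialOrder α]
    [IsOrderedAddMonoid α] {s : Finset ι} {f g : ι → α} {i : ι} {δ : α} (hi : i ∈ s)
    (hfg : ∀ j ∈ s, f j ≤ g j) (hδ : f i + δ ≤ g i) :
    ∑ j ∈ s, f j + δ ≤ ∑ j ∈ s, g j := by
  classical
  rw [← Finset.add_sum_erase s f hi, ← Finset.add_sum_erase s g hi, add_right_comm]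
  exact add_le_add hδ (Finset.sum_le_sum fun j hj => hfg j (Finset.mem_of_mem_erase hj))

theorem ineq_lemma_two_part6_general (k : ℕ) (a : Fin k → ℕ) (c n : ℕ)
    (hineq : (∑ i, (4 * (a i : ℚ) + 3) / 7) + (c : ℚ) ≥ (4 * (n : ℚ) + 2) / 7) :
    ((∑ i, ⌈(4 * (a i : ℚ) + 3) / 7⌉) + (c : ℤ) ≥ ⌈(4 * (n : ℚ) + 3) / 7⌉) ∨
      (∀ i, (4 * a i + 3) % 7 = 0) := by
  by_cases hall : ∀ i, (4 * a i + 3) % 7 = 0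
  · exact Or.inr hall
  obtain ⟨i₀, hi₀⟩ := not_forall.mp hall
  -- rounding up gains 1/7 here, exactly the gap between (4n+2)/7 and (4n+3)/7
  have hgain : (4 * (a i₀ : ℚ) + 3) / 7 + 1 / 7 ≤ ⌈(4 * (a i₀ : ℚ) + 3) / 7⌉ := by
    have := Int.add_one_div_le_ceil_div_of_not_dvd (m := 4 * a i₀ + 3) (d := 7) (by norm_num)
      (by omega)
    push_cast at this
    linarith
  have hsum := Finset.sum_add_le_sum_of_le_of_mem (Finset.mem_univ i₀)
    (fun i _ => Int.le_ceil ((4 * (a i : ℚ) + 3) / 7)) hgain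
  left
  rw [ge_iff_le, Int.ceil_le]
  push_cast
  linarith

/-- Lemma 2.2(6): for `k ≥ 1` and positive integers `a1, …, ak, c, n` with
`Σ (4ai+3)/7 + c ≥ (4n+2)/7`, either `Σ ⌈(4ai+3)/7⌉ + c ≥ ⌈(4n+3)/7⌉` or
`4ai+3 ≡ 0 (mod 7)` for every `i`. -/
theorem ineq_lemma_two_part6 (k : ℕ) (hk : 1 ≤ k) (a : Fin k → ℕ) (c n : ℕ)
    (ha : ∀ i, 0 < a i) (hc : 0 < c) (hn : 0 < n)
    (hineq : (∑ i, (4 * (a i : ℚ) + 3) / 7) + (c : ℚ) ≥ (4 * (n : ℚ) + 2) / 7) :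
    ((∑ i, ⌈(4 * (a i : ℚ) + 3) / 7⌉) + (c : ℤ) ≥ ⌈(4 * (n : ℚ) + 3) / 7⌉) ∨
      (∀ i, (4 * a i + 3) % 7 = 0) :=
  ineq_lemma_two_part6_general k a c n hineq
end

section
/- Let k ≥ 1, let a1, ..., ak, c, n be positive integers with (Σ_{i=1}^k (4ai+3)/7) + c ≥ (4n+1)/7. Then either Σ_{i=1}^k ⌈(4ai+3)/7⌉ + c ≥ ⌈(4n+3)/7⌉, or there exists an index j such that 4aj+3 ≡ 0 or 6 (mod 7) and 4ai+3 ≡ 0 (mod 7) for all i ≠ j. -/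
/-!
Write `mᵢ = 4aᵢ + 3`. The ceiling `⌈mᵢ/7⌉` exceeds `mᵢ/7` by at least `1/7` when `7 ∤ mᵢ`, and by
at least `2/7` when moreover `mᵢ ≢ 6 (mod 7)`. Since the hypothesis falls short of `(4n+3)/7` by only
`2/7`, the ceilings close the gap unless at most one `mᵢ` is prime to `7`, and that one is `≡ 6`.
-/

lemma div_le_ceil_div_sub_div {d m g : ℕ} (hm : m % d ≠ 0) (hg : m % d + g ≤ d) :
    (g : ℚ) / d ≤ ⌈(m : ℚ) / d⌉ - m / d := by
  have hd : 0 < d := Nat.pos_of_ne_zero (by rintro rfl; simp at hm hg; omega)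
  have hdq : (0 : ℚ) < d := by exact_mod_cast hd
  have hdiv := Nat.div_add_mod m d
  generalize m / d = q at hdiv
  have hquot : (q : ℚ) < m / d := by
    rw [lt_div_iff₀ hdq]
    exact_mod_cast (by nlinarith [Nat.pos_of_ne_zero hm] : q * d < m)
  have hceil : (q : ℤ) + 1 ≤ ⌈(m : ℚ) / d⌉ :=
    Int.add_one_le_of_lt (Int.lt_ceil.mpr (by exact_mod_cast hquot))
  generalize ⌈(m : ℚ) / d⌉ = C at hceil ⊢
  have hC : (q : ℚ) + 1 ≤ C := by exact_mod_cast hceil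
  have hnum : (m : ℚ) + g ≤ d * (q + 1) := by
    exact_mod_cast (by nlinarith : m + g ≤ d * (q + 1))
  calc (g : ℚ) / d = (m + g) / d - m / d := by ring
    _ ≤ C - m / d := by
      gcongr
      rw [div_le_iff₀ hdq]
      nlinarith

lemma sum_add_sum_ceil_sub_le_sum_ceil {ι : Type*} (s t : Finset ι) (hts : t ⊆ s) (f : ι → ℚ) :
    ∑ i ∈ s, f i + ∑ i ∈ t, (⌈f i⌉ - f i) ≤ ∑ i ∈ s, (⌈f i⌉ : ℚ) := by
  have hgain : ∑ i ∈ t, (⌈f i⌉ - f i) ≤ ∑ i ∈ s, ((⌈f i⌉ : ℚ) - f i) :=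
    Finset.sum_le_sum_of_subset_of_nonneg hts fun i _ _ => sub_nonneg.mpr (Int.le_ceil _)
  simp only [Finset.sum_sub_distrib] at hgain ⊢
  linarith

lemma ceil_le_sum_ceil_add {ι : Type*} [Fintype ι] (f : ι → ℚ) (c : ℤ) {y δ : ℚ}
    (hy : y ≤ ∑ i, f i + c + δ) (t : Finset ι) (hδ : δ ≤ ∑ i ∈ t, (⌈f i⌉ - f i)) :
    ⌈y⌉ ≤ ∑ i, ⌈f i⌉ + c := by
  have := sum_add_sum_ceil_sub_le_sum_ceil Finset.univ t (Finset.subset_univ t) f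
  rw [Int.ceil_le]
  push_cast
  linarith

theorem ineq_lemma_two_part7_general (k : ℕ) (hk : 1 ≤ k) (a : Fin k → ℕ) (c n : ℕ)
    (hineq : (∑ i, (4 * (a i : ℚ) + 3) / 7) + (c : ℚ) ≥ (4 * (n : ℚ) + 1) / 7) :
    ((∑ i, ⌈(4 * (a i : ℚ) + 3) / 7⌉) + (c : ℤ) ≥ ⌈(4 * (n : ℚ) + 3) / 7⌉) ∨
      (∃ j, ((4 * a j + 3) % 7 = 0 ∨ (4 * a j + 3) % 7 = 6) ∧
        ∀ i, i ≠ j → (4 * a i + 3) % 7 = 0) := by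
  have gain : ∀ i (g : ℕ), (4 * a i + 3) % 7 ≠ 0 → (4 * a i + 3) % 7 + g ≤ 7 →
      (g : ℚ) / 7 ≤ ⌈(4 * (a i : ℚ) + 3) / 7⌉ - (4 * (a i : ℚ) + 3) / 7 := fun i g h0 hg => by
    simpa using div_le_ceil_div_sub_div (d := 7) h0 hg
  have hy : (4 * (n : ℚ) + 3) / 7 ≤ ∑ i, (4 * (a i : ℚ) + 3) / 7 + ((c : ℤ) : ℚ) + 2 / 7 := by
    push_cast
    linarith
  by_cases hbig : ∃ j, (4 * a j + 3) % 7 ≠ 0 ∧ (4 * a j + 3) % 7 ≠ 6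
  · obtain ⟨j, h0, h6⟩ := hbig
    exact Or.inl (ceil_le_sum_ceil_add _ _ hy {j} (by simpa using gain j 2 h0 (by omega)))
  by_cases htwo : ∃ i j, i ≠ j ∧ (4 * a i + 3) % 7 ≠ 0 ∧ (4 * a j + 3) % 7 ≠ 0
  · obtain ⟨i, j, hij, hi, hj⟩ := htwo
    refine Or.inl (ceil_le_sum_ceil_add _ _ hy {i, j} ?_)
    rw [Finset.sum_pair hij]
    linarith [gain i 1 hi (by omega), gain j 1 hj (by omega)]
  push Not at hbig htwo
  right
  by_cases hall : ∀ i, (4 * a i + 3) % 7 = 0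
  · exact ⟨⟨0, hk⟩, Or.inl (hall _), fun i _ => hall i⟩
  push Not at hall
  obtain ⟨j, hj⟩ := hall
  exact ⟨j, Or.inr (hbig j hj), fun i hij => by_contra fun hi => hj (htwo i j hij hi)⟩

/-- Lemma 2.2(7): for `k ≥ 1` and positive integers `a1, …, ak, c, n` with
`Σ (4ai+3)/7 + c ≥ (4n+1)/7`, either `Σ ⌈(4ai+3)/7⌉ + c ≥ ⌈(4n+3)/7⌉` or there
is an index `j` with `4aj+3 ≡ 0` or `6 (mod 7)` and `4ai+3 ≡ 0 (mod 7)` for all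
`i ≠ j`. -/
theorem ineq_lemma_two_part7 (k : ℕ) (hk : 1 ≤ k) (a : Fin k → ℕ) (c n : ℕ)
    (ha : ∀ i, 0 < a i) (hc : 0 < c) (hn : 0 < n)
    (hineq : (∑ i, (4 * (a i : ℚ) + 3) / 7) + (c : ℚ) ≥ (4 * (n : ℚ) + 1) / 7) :
    ((∑ i, ⌈(4 * (a i : ℚ) + 3) / 7⌉) + (c : ℤ) ≥ ⌈(4 * (n : ℚ) + 3) / 7⌉) ∨
      (∃ j, ((4 * a j + 3) % 7 = 0 ∨ (4 * a j + 3) % 7 = 6) ∧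
        ∀ i, i ≠ j → (4 * a i + 3) % 7 = 0) :=
  ineq_lemma_two_part7_general k hk a c n hineq
end

section
/- Let a, a1, c, n be positive integers with (4a+3)/7 + (4a1+3)/7 + c − 1 ≥ (4n)/7. Then max over A ∈ {0,1} of [ ⌈(4(a−A)+3)/7⌉ + ⌈(4(a1−A)+3)/7⌉ + c − (1−A) ] ≥ ⌈(4n+3)/7⌉. -/
/- If the fractional gaps `⌈x⌉ - x` and `⌈y⌉ - y` together reach `δ`, the first entry of the
maximum already bounds `⌈x + y + δ⌉`; otherwise each gap is below `δ`, so shifting `x` and `y`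
down by `1 - δ` does not lower their ceilings, and the second entry pays for the extra unit. -/
theorem Int.ceil_add_add_le_max {α : Type*} [CommRing α] [LinearOrder α] [IsStrictOrderedRing α]
    [FloorRing α] {δ : α} (hδ : δ ≤ 1) (x y : α) :
    ⌈x + y + δ⌉ ≤ max (⌈x⌉ + ⌈y⌉) (⌈x - (1 - δ)⌉ + ⌈y - (1 - δ)⌉ + 1) := by
  rcases le_or_gt (x + y + δ) (⌈x⌉ + ⌈y⌉) with hgap | hgap
  · exact le_max_of_le_left (Int.ceil_le.mpr (mod_cast hgap))
  · have hx : ⌈x⌉ ≤ ⌈x - (1 - δ)⌉ := by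
      rw [← Int.sub_one_lt_iff, Int.lt_ceil]
      push_cast
      linarith [Int.le_ceil y]
    have hy : ⌈y⌉ ≤ ⌈y - (1 - δ)⌉ := by
      rw [← Int.sub_one_lt_iff, Int.lt_ceil]
      push_cast
      linarith [Int.le_ceil x]
    refine le_max_of_le_right (le_trans (Int.ceil_le.mpr ?_) (by omega : ⌈x⌉ + ⌈y⌉ + 1 ≤ _))
    push_cast
    linarith [Int.le_ceil x, Int.le_ceil y]

theorem ineq_lemma_two_part1_general (a a1 c n : ℕ)
    (hineq : (4 * (a : ℚ) + 3) / 7 + (4 * (a1 : ℚ) + 3) / 7 + (c : ℚ) - 1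
      ≥ 4 * (n : ℚ) / 7) :
    ⌈(4 * (n : ℚ) + 3) / 7⌉ ≤
      max (⌈(4 * (a : ℚ) + 3) / 7⌉ + ⌈(4 * (a1 : ℚ) + 3) / 7⌉ + (c : ℤ) - 1)
        (⌈(4 * ((a : ℚ) - 1) + 3) / 7⌉ + ⌈(4 * ((a1 : ℚ) - 1) + 3) / 7⌉ + (c : ℤ)) := by
  have hshift (m : ℚ) : (4 * (m - 1) + 3) / 7 = (4 * m + 3) / 7 - (1 - 3 / 7) := by ring
  rw [hshift, hshift]
  calc ⌈(4 * (n : ℚ) + 3) / 7⌉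
      ≤ ⌈(4 * (a : ℚ) + 3) / 7 + (4 * (a1 : ℚ) + 3) / 7 + 3 / 7 + (((c : ℤ) - 1 : ℤ) : ℚ)⌉ :=
        Int.ceil_mono (by push_cast; linarith)
    _ = ⌈(4 * (a : ℚ) + 3) / 7 + (4 * (a1 : ℚ) + 3) / 7 + 3 / 7⌉ + ((c : ℤ) - 1) :=
        Int.ceil_add_intCast _ _
    _ ≤ _ := by
      grw [Int.ceil_add_add_le_max (by norm_num)]
      omega

/-- Lemma 2.2(1) in the case `k = 1`, `L = ∅`: for positive integers `a, a1, c, n`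
with `(4a+3)/7 + (4a1+3)/7 + c - 1 ≥ 4n/7`, the maximum over `A ∈ {0,1}` of
`⌈(4(a-A)+3)/7⌉ + ⌈(4(a1-A)+3)/7⌉ + c - (1-A)` is at least `⌈(4n+3)/7⌉`. -/
theorem ineq_lemma_two_part1 (a a1 c n : ℕ)
    (ha : 0 < a) (ha1 : 0 < a1) (hc : 0 < c) (hn : 0 < n)
    (hineq : (4 * (a : ℚ) + 3) / 7 + (4 * (a1 : ℚ) + 3) / 7 + (c : ℚ) - 1
      ≥ 4 * (n : ℚ) / 7) :
    ⌈(4 * (n : ℚ) + 3) / 7⌉ ≤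
      max (⌈(4 * (a : ℚ) + 3) / 7⌉ + ⌈(4 * (a1 : ℚ) + 3) / 7⌉ + (c : ℤ) - 1)
        (⌈(4 * ((a : ℚ) - 1) + 3) / 7⌉ + ⌈(4 * ((a1 : ℚ) - 1) + 3) / 7⌉ + (c : ℤ)) :=
  ineq_lemma_two_part1_general a a1 c n hineq
end

section
/- Let G be a finite simple graph and v a vertex of G with degree at most 3. Then there exists an induced forest of G of maximum size that contains v. -/
/-!
Let `T` be a maximum induced forest with `v ∉ T`. The at most three neighbours of `v` in the
forest `G[T]` are pairwise separated by a single vertex `m` of `T`: the median of the three if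
they lie in one tree, and otherwise one of them. Hence `v` has at most one neighbour in each tree
of `G[T] - m`, so `(T - m) + v` is an induced forest of the same size.
-/

theorem Finset.exists_subset_triple {α : Type*} [DecidableEq α] [Nonempty α] {s : Finset α}
    (hs : s.card ≤ 3) : ∃ a b c : α, s ⊆ {a, b, c} := by
  obtain ⟨d⟩ := ‹Nonempty α›
  interval_cases h : s.card
  · exact ⟨d, d, d, by simp [Finset.card_eq_zero.1 h]⟩
  · obtain ⟨a, rfl⟩ := Finset.card_eq_one.1 h
    exact ⟨a, a, a, by simp⟩
  · obtain ⟨a, b, -, rfl⟩ := Finset.card_eq_two.1 h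
    exact ⟨a, a, b, by simp⟩
  · obtain ⟨a, b, c, -, -, -, rfl⟩ := Finset.card_eq_three.1 h
    exact ⟨a, b, c, subset_rfl⟩

namespace SimpleGraph

variable {V W : Type*} {G : SimpleGraph V} {H : SimpleGraph W}

theorem Walk.IsCycle.exists_walk_between_neighbors {v : V} {c : G.Walk v v} (hc : c.IsCycle) :
    ∃ (x y : V) (r : G.Walk x y), G.Adj v x ∧ G.Adj v y ∧ x ≠ y ∧ v ∉ r.support ∧
      ∀ z ∈ r.support, z ∈ c.support := by
  have hp : c.tail.IsPath := hc.isPath_tail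
  have hlen := c.length_tail_add_one hc.not_nil
  have hc3 := hc.three_le_length
  have hpn : ¬ c.tail.Nil := fun h => by rw [h.length_eq_zero] at hlen; omega
  have hrn : ¬ c.tail.dropLast.Nil := fun h => by
    have := c.tail.length_dropLast_add_one hpn
    rw [h.length_eq_zero] at this; omega
  have hsupp := Walk.support_dropLast_concat hpn
  have hnodup := hp.support_nodup
  rw [← hsupp, List.nodup_append] at hnodup
  refine ⟨_, _, c.tail.dropLast, c.adj_snd hc.not_nil, (c.tail.adj_penultimate hpn).symm,
    fun h => hrn ((hp.dropLast.nil_iff_eq).2 h), fun h => hnodup.2.2 v h v (by simp) rfl, ?_⟩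
  intro z hz
  rw [← Walk.cons_support_tail hc.not_nil, ← hsupp]
  simp [hz]

theorem isAcyclic_induce_iff {s : Set V} :
    (G.induce s).IsAcyclic ↔ ∀ ⦃u : V⦄ (c : G.Walk u u), c.IsCycle → ¬ ∀ x ∈ c.support, x ∈ s := by
  constructor
  · intro h u c hc hcs
    refine h (c.induce s hcs) ?_
    rw [← Walk.isCycle_map_iff_of_injective (f := (Embedding.induce (G := G) s).toHom)
      (Embedding.induce (G := G) s).injective, Walk.map_induce]
    exact hc
  · intro h u c hc
    refine h (c.map (Embedding.induce (G := G) s).toHom)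
      ((Walk.isCycle_map_iff_of_injective (Embedding.induce (G := G) s).injective).2 hc) ?_
    simp only [Walk.support_map, List.mem_map]
    rintro _ ⟨z, -, rfl⟩
    exact z.2

theorem isAcyclic_induce_insert {s : Set V} {v : V} (hs : (G.induce s).IsAcyclic)
    (h : ∀ a b, G.Adj v a → G.Adj v b → ∀ p : G.Walk a b, (∀ x ∈ p.support, x ∈ s) → a = b) :
    (G.induce (insert v s)).IsAcyclic := by
  classical
  rw [isAcyclic_induce_iff] at hs ⊢
  intro u c hc hcs
  by_cases hv : v ∈ c.support
  · obtain ⟨x, y, r, hx, hy, hxy, hvr, hrc⟩ :=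
      ((Walk.isCycle_rotate hv).2 hc).exists_walk_between_neighbors
    refine hxy (h x y hx hy r fun z hz => ?_)
    have := hcs z ((c.mem_support_rotate_iff v hv).1 (hrc z hz))
    exact this.resolve_left (by rintro rfl; exact hvr hz)
  · exact hs c hc fun z hz => (hcs z hz).resolve_left (by rintro rfl; exact hv hz)

def Separates (H : SimpleGraph W) (m : W) (s : Set W) : Prop :=
  ∀ x ∈ s, ∀ y ∈ s, x ≠ y → ∀ p : H.Walk x y, m ∈ p.support

theorem Separates.mono {m : W} {s t : Set W} (h : H.Separates m t) (hst : s ⊆ t) :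
    H.Separates m s :=
  fun x hx y hy => h x (hst hx) y (hst hy)

theorem separates_triple {m a b c : W} (hab : ∀ p : H.Walk a b, m ∈ p.support)
    (hac : ∀ p : H.Walk a c, m ∈ p.support) (hbc : ∀ p : H.Walk b c, m ∈ p.support) :
    H.Separates m {a, b, c} := by
  intro x hx y hy hxy p
  simp only [Set.mem_insert_iff, Set.mem_singleton_iff] at hx hy
  rcases hx with rfl | rfl | rfl <;> rcases hy with rfl | rfl | rfl <;>
    first
    | exact absurd rfl hxy
    | exact hab p | exact hac p | exact hbc p
    | simpa using hab p.reverse | simpa using hac p.reverse | simpa using hbc p.reverse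

theorem IsAcyclic.mem_support_of_isPath (hH : H.IsAcyclic) {a b m : W} {p : H.Walk a b}
    (hp : p.IsPath) (hm : m ∈ p.support) (q : H.Walk a b) : m ∈ q.support := by
  classical
  have : q.bypass = p :=
    congrArg Subtype.val ((hH.subsingleton_path a b).elim ⟨q.bypass, q.bypass_isPath⟩ ⟨p, hp⟩)
  exact q.support_bypass_subset_support (this ▸ hm)

theorem IsAcyclic.exists_median_of_isPath (hH : H.IsAcyclic) {a b c : W} {p : H.Walk a b}
    {q : H.Walk a c} (hp : p.IsPath) (hq : q.IsPath) :
    ∃ m ∈ p.support, m ∈ q.support ∧ ∃ r : H.Walk b c, r.IsPath ∧ m ∈ r.support := by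
  classical
  induction p generalizing c with
  | nil => exact ⟨_, Walk.start_mem_support _, q.start_mem_support, q, hq, q.start_mem_support⟩
  | @cons a x b hx p ih =>
    cases q with
    | nil => exact ⟨a, by simp, by simp, _, hp.reverse, by simp⟩
    | @cons _ y c hy q =>
      rw [Walk.cons_isPath_iff] at hp hq
      by_cases hxy : x = y
      · subst hxy
        obtain ⟨m, hmp, hmq, r, hr, hmr⟩ := ih hp.1 hq.1
        exact ⟨m, by simp [hmp], by simp [hmq], r, hr, hmr⟩
      have hdisj : ∀ z ∈ p.support, z ∉ q.support := by
        intro z hzp hzq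
        have hpz : (Walk.cons hx (p.takeUntil z hzp)).IsPath :=
          (Walk.cons_isPath_iff _ _).2
            ⟨hp.1.takeUntil hzp, fun ha => hp.2 (p.support_takeUntil_subset_support hzp ha)⟩
        have hqz : (Walk.cons hy (q.takeUntil z hzq)).IsPath :=
          (Walk.cons_isPath_iff _ _).2
            ⟨hq.1.takeUntil hzq, fun ha => hq.2 (q.support_takeUntil_subset_support hzq ha)⟩
        have := (hH.subsingleton_path a z).elim ⟨_, hpz⟩ ⟨_, hqz⟩
        exact hxy (by simpa using congrArg (fun P : H.Path a z => (P : H.Walk a z).snd) this)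
      refine ⟨a, by simp, by simp, (Walk.cons hx p).reverse.append (Walk.cons hy q), ?_, by simp⟩
      rw [Walk.isPath_def, Walk.support_append, Walk.support_reverse, Walk.support_cons,
        Walk.support_cons, List.tail_cons, List.nodup_append, List.nodup_reverse, List.nodup_cons]
      refine ⟨⟨hp.2, hp.1.support_nodup⟩, hq.1.support_nodup, ?_⟩
      simp only [List.mem_reverse, List.mem_cons]
      rintro z (rfl | hzp) w hw rfl
      · exact hq.2 hw
      · exact hdisj z hzp hw

theorem IsAcyclic.exists_separates_of_reachable (hH : H.IsAcyclic) {a b c : W}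
    (hab : H.Reachable a b) (hac : H.Reachable a c) : ∃ m, H.Separates m {a, b, c} := by
  obtain ⟨p, hp⟩ := hab.exists_isPath
  obtain ⟨q, hq⟩ := hac.exists_isPath
  obtain ⟨m, hmp, hmq, r, hr, hmr⟩ := hH.exists_median_of_isPath hp hq
  exact ⟨m, separates_triple (hH.mem_support_of_isPath hp hmp) (hH.mem_support_of_isPath hq hmq)
    (hH.mem_support_of_isPath hr hmr)⟩

theorem IsAcyclic.exists_separates_triple (hH : H.IsAcyclic) (a b c : W) :
    ∃ m, H.Separates m {a, b, c} := by
  by_cases hbc : H.Reachable b c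
  · by_cases hab : H.Reachable a b
    · exact hH.exists_separates_of_reachable hab (hab.trans hbc)
    · refine ⟨b, separates_triple (fun p => (hab ⟨p⟩).elim)
        (fun p => (hab (p.reachable.trans hbc.symm)).elim) fun p => p.start_mem_support⟩
  · exact ⟨a, separates_triple (fun p => p.start_mem_support) (fun p => p.start_mem_support)
      fun p => (hbc ⟨p⟩).elim⟩

theorem exists_induce_isAcyclic_mem_card_le {v : V} [Fintype (G.neighborSet v)]
    (hdeg : G.degree v ≤ 3) {T : Finset V} (hT : (G.induce (T : Set V)).IsAcyclic) (hv : v ∉ T) :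
    ∃ T' : Finset V, v ∈ T' ∧ (G.induce (T' : Set V)).IsAcyclic ∧ T.card ≤ T'.card := by
  classical
  rcases T.eq_empty_or_nonempty with rfl | ⟨u, hu⟩
  · exact ⟨{v}, Finset.mem_singleton_self v, by simpa using IsAcyclic.of_subsingleton, by simp⟩
  have : Nonempty (T : Set V) := ⟨⟨u, hu⟩⟩
  set N : Finset (T : Set V) := Finset.univ.filter fun x => G.Adj v x
  have hN : N.card ≤ 3 := by
    refine le_trans (Finset.card_le_card_of_injOn Subtype.val ?_ Subtype.val_injective.injOn) hdeg
    intro x hx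
    simpa [N] using hx
  obtain ⟨a, b, c, habc⟩ := Finset.exists_subset_triple hN
  obtain ⟨m, hm⟩ := hT.exists_separates_triple a b c
  have hsep : (G.induce (T : Set V)).Separates m {x | G.Adj v x} :=
    hm.mono fun x hx => by simpa using habc (by simpa [N] using hx)
  refine ⟨insert v (T.erase m), Finset.mem_insert_self _ _, ?_, ?_⟩
  · rw [Finset.coe_insert, Finset.coe_erase]
    refine isAcyclic_induce_insert (hT.embedding (G.induceHomOfLE Set.sdiff_subset)) ?_
    intro x y hx hy p hp
    by_contra hxy
    have hpT : ∀ z ∈ p.support, z ∈ (T : Set V) := fun z hz => (hp z hz).1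
    have := hsep _ hx _ hy (by simpa using hxy) (p.induce _ hpT)
    simp only [Walk.support_induce, List.mem_attachWith] at this
    exact (hp m this).2 rfl
  · rw [Finset.card_insert_of_notMem (fun h => hv (Finset.mem_of_mem_erase h)),
      Finset.card_erase_add_one m.2]

end SimpleGraph

theorem exists_max_induced_forest_containing_low_degree_vertex_general
    {V : Type*} [Fintype V] (G : SimpleGraph V) [DecidableRel G.Adj]
    (v : V) (hdeg : G.degree v ≤ 3) :
    ∃ S : Finset V, v ∈ S ∧ (G.induce (S : Set V)).IsAcyclic ∧
      ∀ T : Finset V, (G.induce (T : Set V)).IsAcyclic → T.card ≤ S.card := by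
  classical
  obtain ⟨T, hT, hmax⟩ := Finset.exists_max_image
    (Finset.univ.filter fun T : Finset V => (G.induce (T : Set V)).IsAcyclic) Finset.card
    ⟨∅, by simpa using SimpleGraph.IsAcyclic.of_subsingleton⟩
  simp only [Finset.mem_filter, Finset.mem_univ, true_and] at hT hmax
  by_cases hv : v ∈ T
  · exact ⟨T, hv, hT, hmax⟩
  obtain ⟨S, hvS, hS, hTS⟩ := SimpleGraph.exists_induce_isAcyclic_mem_card_le hdeg hT hv
  exact ⟨S, hvS, hS, fun T' hT' => (hmax T' hT').trans hTS⟩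

/-- If `v` is a vertex of degree at most 3 in a finite simple graph `G`, then some
maximum induced forest of `G` contains `v`. -/
theorem exists_max_induced_forest_containing_low_degree_vertex
    {V : Type*} [Fintype V] [DecidableEq V] (G : SimpleGraph V) [DecidableRel G.Adj]
    (v : V) (hdeg : G.degree v ≤ 3) :
    ∃ S : Finset V, v ∈ S ∧ (G.induce (S : Set V)).IsAcyclic ∧
      ∀ T : Finset V, (G.induce (T : Set V)).IsAcyclic → T.card ≤ S.card :=
  exists_max_induced_forest_containing_low_degree_vertex_general G v hdeg
end
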